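/- Let g be a real nilpotent Lie algebra with a complex structure J such that g_k ∩ J(g_k) = {0} for some k ≥ 1. Suppose r > 1 is the smallest integer such that g_{k+r} ∩ J(g_k) ≠ {0}. Then g_{k+r-1} ∩ J(g_{k+r-1}) ≠ {0}. -/

import Mathlib

/-!
Take `X ≠ 0` in `g_{k+r} ∩ J(g_k)`, so `JX ∈ g_k`, and suppose `V := g_{k+r-1}` satisfies
`V ∩ JV = 0`. For every `Y`, both `[X,Y]` and `[JX,Y]` lie in `V`, and the Nijenhuis condition
writes `[X,Y] - [JX,JY]` as `-J([JX,Y] + [X,JY])`; hence `[X,Y] - [JX,JY] ∈ V ∩ JV = 0`.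
Thus `[X,Y] = [JX,JY] ∈ g_{k-1}` for all `Y`, i.e. `X ∈ g_k ∩ J(g_k) = 0`, a contradiction.
-/

/-- The ascending central series of a Lie algebra:
`acs g 0 = 0`, `acs g (k+1) = {X | [X,g] ⊆ acs g k}`. -/
def acs (g : Type*) [LieRing g] [LieAlgebra ℝ g] : ℕ → Submodule ℝ g
  | 0 => ⊥
  | k + 1 =>
    { carrier := {X : g | ∀ Y : g, ⁅X, Y⁆ ∈ acs g k}
      zero_mem' := by intro Y; simp
      add_mem' := by
        intro a b ha hb Y
        rw [add_lie]; exact (acs g k).add_mem (ha Y) (hb Y)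
      smul_mem' := by
        intro c x hx Y
        rw [smul_lie]; exact (acs g k).smul_mem c (hx Y) }

section ComplexStructure

variable {R L : Type*} [CommRing R] [LieRing L] [LieAlgebra R L] {J : L →ₗ[R] L}

theorem apply_mem_of_mem_map (hJ2 : ∀ X : L, J (J X) = -X)
    {V : Submodule R L} {X : L} (hX : X ∈ V.map J) : J X ∈ V := by
  obtain ⟨Y, hY, rfl⟩ := hX
  simpa [hJ2] using V.neg_mem hY

theorem lie_sub_lie_apply_eq_neg_apply
    (hN : ∀ X Y : L, ⁅X, Y⁆ + J ⁅J X, Y⁆ + J ⁅X, J Y⁆ - ⁅J X, J Y⁆ = 0) (X Y : L) :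
    ⁅X, Y⁆ - ⁅J X, J Y⁆ = J (-(⁅J X, Y⁆ + ⁅X, J Y⁆)) := by
  rw [map_neg, map_add, eq_neg_iff_add_eq_zero, ← hN X Y]
  abel

theorem lie_eq_lie_apply_of_inf_map_eq_bot
    (hN : ∀ X Y : L, ⁅X, Y⁆ + J ⁅J X, Y⁆ + J ⁅X, J Y⁆ - ⁅J X, J Y⁆ = 0)
    {V : Submodule R L} (hV : V ⊓ V.map J = ⊥) {X : L}
    (hX : ∀ Y, ⁅X, Y⁆ ∈ V) (hJX : ∀ Y, ⁅J X, Y⁆ ∈ V) (Y : L) :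
    ⁅X, Y⁆ = ⁅J X, J Y⁆ := by
  have hmem : ⁅X, Y⁆ - ⁅J X, J Y⁆ ∈ V ⊓ V.map J := by
    refine ⟨V.sub_mem (hX Y) (hJX (J Y)), ?_⟩
    rw [lie_sub_lie_apply_eq_neg_apply hN]
    exact Submodule.mem_map_of_mem (V.neg_mem (V.add_mem (hJX Y) (hX (J Y))))
  rw [hV, Submodule.mem_bot] at hmem
  exact sub_eq_zero.mp hmem

end ComplexStructure

section AscendingCentralSeries

variable {g : Type*} [LieRing g] [LieAlgebra ℝ g]

theorem acs_le_acs_succ (n : ℕ) : acs g n ≤ acs g (n + 1) := by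
  induction n with
  | zero => exact bot_le
  | succ n ih => exact fun X hX Y => ih (hX Y)

theorem acs_monotone : Monotone (acs g) :=
  monotone_nat_of_le_succ acs_le_acs_succ

theorem mem_acs_succ_of_inf_map_eq_bot {J : g →ₗ[ℝ] g}
    (hN : ∀ X Y : g, ⁅X, Y⁆ + J ⁅J X, Y⁆ + J ⁅X, J Y⁆ - ⁅J X, J Y⁆ = 0)
    {m n : ℕ} (hnm : n ≤ m) (hm : acs g m ⊓ (acs g m).map J = ⊥) {X : g}
    (hX : X ∈ acs g (m + 1)) (hJX : J X ∈ acs g (n + 1)) : X ∈ acs g (n + 1) := fun Y => by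
  rw [lie_eq_lie_apply_of_inf_map_eq_bot hN hm hX (fun Y => acs_monotone hnm (hJX Y))]
  exact hJX (J Y)

end AscendingCentralSeries

theorem acs_inf_J_ne_bot_of_minimal_general (g : Type*) [LieRing g] [LieAlgebra ℝ g]
    (J : g →ₗ[ℝ] g) (hJ2 : ∀ X : g, J (J X) = -X)
    (hN : ∀ X Y : g, ⁅X, Y⁆ + J ⁅J X, Y⁆ + J ⁅X, J Y⁆ - ⁅J X, J Y⁆ = 0)
    (k : ℕ) (hk : 1 ≤ k)
    (h : acs g k ⊓ (acs g k).map J = ⊥)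
    (r : ℕ)
    (hne : acs g (k + r) ⊓ (acs g k).map J ≠ ⊥) :
    acs g (k + r - 1) ⊓ (acs g (k + r - 1)).map J ≠ ⊥ := by
  obtain ⟨n, rfl⟩ : ∃ n, k = n + 1 := ⟨k - 1, by omega⟩
  obtain ⟨X, ⟨hX, hXJ⟩, hX0⟩ := (Submodule.ne_bot_iff _).mp hne
  rw [show n + 1 + r = n + r + 1 by omega] at hX
  rw [show n + 1 + r - 1 = n + r by omega]
  intro hbot
  have hXk : X ∈ acs g (n + 1) :=
    mem_acs_succ_of_inf_map_eq_bot hN (Nat.le_add_right n r) hbot hX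
      (apply_mem_of_mem_map hJ2 hXJ)
  exact hX0 ((Submodule.mem_bot ℝ).mp (h ▸ ⟨hXk, hXJ⟩))

/-- if `g_k ∩ J(g_k) = 0` and `r > 1` is the smallest integer with
`g_{k+r} ∩ J(g_k) ≠ 0`, then `g_{k+r-1} ∩ J(g_{k+r-1}) ≠ 0`. -/
theorem acs_inf_J_ne_bot_of_minimal (g : Type*) [LieRing g] [LieAlgebra ℝ g]
    [FiniteDimensional ℝ g] (hnil : ∃ s : ℕ, acs g s = ⊤)
    (J : g →ₗ[ℝ] g) (hJ2 : ∀ X : g, J (J X) = -X)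
    (hN : ∀ X Y : g, ⁅X, Y⁆ + J ⁅J X, Y⁆ + J ⁅X, J Y⁆ - ⁅J X, J Y⁆ = 0)
    (k : ℕ) (hk : 1 ≤ k)
    (h : acs g k ⊓ (acs g k).map J = ⊥)
    (r : ℕ) (hr : 1 < r)
    (hne : acs g (k + r) ⊓ (acs g k).map J ≠ ⊥)
    (hmin : ∀ r' : ℕ, 0 < r' → r' < r → acs g (k + r') ⊓ (acs g k).map J = ⊥) :
    acs g (k + r - 1) ⊓ (acs g (k + r - 1)).map J ≠ ⊥ :=
  acs_inf_J_ne_bot_of_minimal_general g J hJ2 hN k hk h r hne
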